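/- arXiv:1506.05867 — 2 statements merged into one kernel-verified Lean document; each statement's English description precedes it below -/
import Mathlib

section
/- The nonzero value y = h_{λμ,1/2}(x) of the half thresholding operator (for x > t) is a critical point of the scalar objective g(y) = (y − x)² + λμ·y^{1/2} on (0, ∞); that is, y satisfies 2(y − x) + (λμ/2)·y^{−1/2} = 0. -/
open Real

lemma aux_rpow_sq_inv (z : ℝ) (hz : 0 < z) : (z ^ 2 : ℝ) ^ (-(1 : ℝ) / 2) = z⁻¹ := by
  rw [show (-(1 : ℝ) / 2) = -(1 / 2) by ring, Real.rpow_neg (by positivity),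
    ← Real.rpow_natCast z 2, ← Real.rpow_mul hz.le]
  norm_num

lemma aux_ineq (c x : ℝ) (hc0 : 0 < c) (hx3 : 0 < x / 3)
    (hx : x > (54 : ℝ) ^ ((1 : ℝ) / 3) / 4 * c ^ ((2 : ℝ) / 3)) :
    c / 8 ≤ (x / 3) ^ ((3 : ℝ) / 2) := by
  have h1 : (54 : ℝ) ^ ((1 : ℝ) / 3) / 12 * c ^ ((2 : ℝ) / 3) ≤ x / 3 := by linarith
  have h2 : (((54 : ℝ) ^ ((1 : ℝ) / 3) / 12) * c ^ ((2 : ℝ) / 3)) ^ ((3 : ℝ) / 2)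
      ≤ (x / 3) ^ ((3 : ℝ) / 2) :=
    Real.rpow_le_rpow (by positivity) h1 (by norm_num)
  have h3 : (((54 : ℝ) ^ ((1 : ℝ) / 3) / 12) * c ^ ((2 : ℝ) / 3)) ^ ((3 : ℝ) / 2)
      = (54 : ℝ) ^ ((1 : ℝ) / 2) / (12 : ℝ) ^ ((3 : ℝ) / 2) * c := by
    rw [Real.mul_rpow (by positivity) (by positivity),
      Real.div_rpow (by positivity) (by norm_num), ← Real.rpow_mul (by norm_num : (0:ℝ) ≤ 54),
      ← Real.rpow_mul hc0.le]
    norm_num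
  have h12 : (12 : ℝ) ^ ((3 : ℝ) / 2) = (1728 : ℝ) ^ ((1 : ℝ) / 2) := by
    rw [show (1728 : ℝ) = (12 : ℝ) ^ (3 : ℕ) by norm_num, ← Real.rpow_natCast (12 : ℝ) 3,
      ← Real.rpow_mul (by norm_num)]
    norm_num
  have h3456 : (8 : ℝ) * (54 : ℝ) ^ ((1 : ℝ) / 2) = (3456 : ℝ) ^ ((1 : ℝ) / 2) := by
    rw [show (3456 : ℝ) = 64 * 54 by norm_num,
      Real.mul_rpow (by norm_num) (by norm_num),
      show (64 : ℝ) = (8 : ℝ) ^ (2 : ℕ) by norm_num, ← Real.rpow_natCast (8 : ℝ) 2,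
      ← Real.rpow_mul (by norm_num)]
    norm_num
  have h5 : (12 : ℝ) ^ ((3 : ℝ) / 2) ≤ 8 * (54 : ℝ) ^ ((1 : ℝ) / 2) := by
    rw [h12, h3456]
    exact Real.rpow_le_rpow (by norm_num) (by norm_num) (by norm_num)
  have h6 : (0 : ℝ) < (12 : ℝ) ^ ((3 : ℝ) / 2) := by positivity
  have h8 : (1 : ℝ) / 8 ≤ (54 : ℝ) ^ ((1 : ℝ) / 2) / (12 : ℝ) ^ ((3 : ℝ) / 2) := by
    rw [div_le_div_iff₀ (by norm_num) h6]
    nlinarith [h5]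
  have h7 : c / 8 ≤ (54 : ℝ) ^ ((1 : ℝ) / 2) / (12 : ℝ) ^ ((3 : ℝ) / 2) * c := by
    have := mul_le_mul_of_nonneg_right h8 hc0.le
    linarith [this]
  calc c / 8 ≤ (54 : ℝ) ^ ((1 : ℝ) / 2) / (12 : ℝ) ^ ((3 : ℝ) / 2) * c := h7
    _ = (((54 : ℝ) ^ ((1 : ℝ) / 3) / 12) * c ^ ((2 : ℝ) / 3)) ^ ((3 : ℝ) / 2) := h3.symm
    _ ≤ (x / 3) ^ ((3 : ℝ) / 2) := h2

/-- The nonzero value `y` of the half thresholding operator at `x > t` is a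
critical point of `g(y) = (y − x)² + λμ√y` on `(0,∞)`:
`2(y − x) + (λμ/2) y^{−1/2} = 0`. -/
theorem halfThresh_value_is_critical_point (lam μ x : ℝ) (hlam : 0 < lam) (hμ : 0 < μ)
    (hx : x > (54 : ℝ) ^ ((1 : ℝ) / 3) / 4 * (lam * μ) ^ ((2 : ℝ) / 3)) :
    2 * (((2 : ℝ) / 3) * x *
          (1 + Real.cos (2 * Real.pi / 3 -
            (2 / 3) * Real.arccos (lam * μ / 8 * (x / 3) ^ (-(3 : ℝ) / 2)))) - x) +
        lam * μ / 2 *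
          (((2 : ℝ) / 3) * x *
            (1 + Real.cos (2 * Real.pi / 3 -
              (2 / 3) * Real.arccos (lam * μ / 8 * (x / 3) ^ (-(3 : ℝ) / 2))))) ^
            (-(1 : ℝ) / 2) = 0 := by
  set c := lam * μ with hc
  have hc0 : 0 < c := mul_pos hlam hμ
  have hx0 : 0 < x := lt_trans (by positivity) hx
  have hx3 : 0 < x / 3 := by linarith
  set a := c / 8 * (x / 3) ^ (-(3 : ℝ) / 2) with ha
  have hxpow : 0 < (x / 3) ^ ((3 : ℝ) / 2) := Real.rpow_pos_of_pos hx3 _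
  have haneg : (x / 3) ^ (-(3 : ℝ) / 2) = ((x / 3) ^ ((3 : ℝ) / 2))⁻¹ := by
    rw [show (-(3 : ℝ) / 2) = -((3 : ℝ) / 2) by ring, Real.rpow_neg hx3.le]
  have ha0 : 0 < a := by rw [ha, haneg]; positivity
  have ha1 : a ≤ 1 := by
    rw [ha, haneg]
    have := aux_ineq c x hc0 hx3 hx
    rw [← div_eq_mul_inv, div_le_one hxpow]
    exact this
  set θ := Real.arccos a with hθ
  have hθcos : Real.cos θ = a := Real.cos_arccos (by linarith) ha1
  have hθ0 : 0 ≤ θ := Real.arccos_nonneg a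
  have hθpi : θ ≤ Real.pi := Real.arccos_le_pi a
  set φ := Real.pi / 3 - θ / 3 with hφ
  have hcosφ : 0 < Real.cos φ := by
    apply Real.cos_pos_of_mem_Ioo
    constructor
    · rw [hφ]; nlinarith [Real.pi_pos]
    · rw [hφ]; nlinarith [Real.pi_pos]
  set s := Real.sqrt (x / 3) with hs
  have hs0 : 0 < s := Real.sqrt_pos.mpr hx3
  have hxs : x = 3 * s ^ 2 := by rw [hs, Real.sq_sqrt hx3.le]; ring
  have hs3 : s ^ 3 = (x / 3) ^ ((3 : ℝ) / 2) := by
    rw [hs, Real.sqrt_eq_rpow, ← Real.rpow_natCast ((x/3) ^ ((1:ℝ)/2)) 3,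
      ← Real.rpow_mul hx3.le]
    norm_num
  have hang : 2 * Real.pi / 3 - 2 / 3 * θ = 2 * φ := by rw [hφ]; ring
  have hy : (2 : ℝ) / 3 * x * (1 + Real.cos (2 * Real.pi / 3 - 2 / 3 * θ))
      = (2 * s * Real.cos φ) ^ 2 := by
    rw [hang, Real.cos_two_mul, hxs]; ring
  rw [hy, aux_rpow_sq_inv _ (by positivity)]
  -- key identity: c = 8 s³ (3 cos φ − 4 cos³ φ)
  have htriple : Real.cos θ = 3 * Real.cos φ - 4 * Real.cos φ ^ 3 := by
    have h : θ = Real.pi - 3 * φ := by rw [hφ]; ring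
    rw [h, Real.cos_pi_sub, Real.cos_three_mul]; ring
  have hkey : c = 8 * s ^ 3 * (3 * Real.cos φ - 4 * Real.cos φ ^ 3) := by
    rw [← htriple, hθcos, ha, haneg, hs3]
    field_simp
  rw [hkey, hxs]
  field_simp
  ring
end

section
/- For the half-thresholding threshold: if |x| ≤ t = (54)^{1/3}/4·(λμ)^{2/3}, then y = 0 is the global minimizer of g(y) = (y − x)² + λμ|y|^{1/2} over y ≥ 0 in the scalar case with x ≥ 0; more precisely, g(0) = x² ≤ g(y) for all y ≥ 0 whenever 0 ≤ x ≤ t. -/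
/-- If `0 ≤ x ≤ t = (54)^{1/3}/4 (λμ)^{2/3}`, then `y = 0` is a global
minimizer of `g(y) = (y − x)² + λμ√y` over `y ≥ 0`:
`g(0) = x² ≤ g(y)` for all `y ≥ 0`. -/
theorem zero_is_global_min_below_threshold (lam μ x : ℝ) (hlam : 0 < lam) (hμ : 0 < μ)
    (hx0 : 0 ≤ x)
    (hxt : x ≤ (54 : ℝ) ^ ((1 : ℝ) / 3) / 4 * (lam * μ) ^ ((2 : ℝ) / 3)) :
    ∀ y : ℝ, 0 ≤ y → x ^ 2 ≤ (y - x) ^ 2 + lam * μ * Real.sqrt y := by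
  set c := lam * μ with hcdef
  have hc : 0 < c := mul_pos hlam hμ
  -- reduce the threshold hypothesis to a polynomial inequality
  have h54 : ((54 : ℝ) ^ ((1 : ℝ) / 3)) ^ (3 : ℕ) = 54 := by
    rw [← Real.rpow_natCast ((54 : ℝ) ^ ((1 : ℝ) / 3)) 3,
      ← Real.rpow_mul (by norm_num : (0:ℝ) ≤ 54)]
    norm_num
  have hc23 : (c ^ ((2 : ℝ) / 3)) ^ (3 : ℕ) = c ^ 2 := by
    rw [← Real.rpow_natCast (c ^ ((2 : ℝ) / 3)) 3, ← Real.rpow_mul hc.le]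
    norm_num
  have hx3 : 32 * x ^ 3 ≤ 27 * c ^ 2 := by
    have h := pow_le_pow_left₀ hx0 hxt 3
    rw [mul_pow, div_pow, h54, hc23] at h
    nlinarith [h]
  intro y hy
  set s := Real.sqrt y with hsdef
  have hs : 0 ≤ s := Real.sqrt_nonneg y
  have hsy : s ^ 2 = y := Real.sq_sqrt hy
  -- key: s^3 + c ≥ 2 x s, via cubes
  have hkey : 2 * x * s ≤ s ^ 3 + c := by
    have h1 : (2 * x * s) ^ 3 ≤ (s ^ 3 + c) ^ 3 := by
      nlinarith [sq_nonneg (s ^ 3 - c / 2), sq_nonneg (s ^ 3 + c), mul_nonneg hx0 hs,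
        mul_nonneg (mul_nonneg hx0 hx0) hx0, pow_nonneg hs 3, hc.le,
        mul_nonneg (pow_nonneg hs 3) hc.le, sq_nonneg s, sq_nonneg x,
        mul_nonneg (mul_nonneg hs hs) hs,
        mul_nonneg (sq_nonneg (s ^ 3 - c / 2)) (pow_nonneg hs 3),
        mul_nonneg (mul_nonneg (pow_nonneg hs 3) (pow_nonneg hs 3)) hc.le]
    have h2 : 0 ≤ 2 * x * s := by positivity
    have h3 : 0 ≤ s ^ 3 + c := by positivity
    exact le_of_pow_le_pow_left₀ (by norm_num) h3 h1
  have hfac : 0 ≤ s * (s ^ 3 - 2 * x * s + c) :=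
    mul_nonneg hs (by linarith)
  nlinarith [hfac, hsy]
end
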